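/- Let λ ∈ ℂ with λ ∉ {0, q²}. Suppose (Γ, d) is a first order differential calculus on X satisfying θ₊ + λ θ₋ = 0 and, for all k, l ∈ {1, …, N}: dz_k·z_l = qλ⁻¹ Σ_{a,b} (R⁻¹)^{ab}_{kl} z_a·dz_b + (q²λ⁻¹−1) z_k·dz_l + q²λ⁻¹(λ⁻¹−1) z_k z_l·θ₊; dz*_k·z*_l = q⁻¹λ Σ_{a,b} R̄^{ab}_{kl} z*_a·dz*_b + (q⁻²λ−1) z*_k·dz*_l − (λ−1) z*_k z*_l·θ₊; dz_k·z*_l = q⁻¹λ Σ_{a,b} (R←⁻¹)^{ab}_{kl} z*_a·dz_b + (q²λ⁻¹−1) z_k·dz*_l − (q²λ⁻¹−1) z_k z*_l·θ₊; dz*_k·z_l = qλ⁻¹ Σ_{a,b} (R→)^{ab}_{kl} z_a·dz*_b + (q⁻²λ−1) z*_k·dz_l − (q²λ⁻¹−1) z*_k z_l·θ₊. Set θ := (q⁻²λ−1)⁻¹ θ₊. Then the calculus is inner: for every x ∈ X, dx = θ·x − x·θ. -/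

import Mathlib

noncomputable section

open scoped BigOperators

namespace QSphere

/-- Generator index set: `Sum.inl i` stands for `z_{i+1}`, `Sum.inr i` for `z*_{i+1}`. -/
abbrev GenIdx (N : ℕ) := Fin N ⊕ Fin N

/-- The free unital `ℂ`-algebra on the `2N` generators. -/
abbrev FA (N : ℕ) := FreeAlgebra ℂ (GenIdx N)

/-- The generator `z_{i+1}` of the free algebra. -/
def zf {N : ℕ} (i : Fin N) : FA N := FreeAlgebra.ι ℂ (Sum.inl i)

/-- The generator `z*_{i+1}` of the free algebra. -/
def zsf {N : ℕ} (i : Fin N) : FA N := FreeAlgebra.ι ℂ (Sum.inr i)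

/-- `q` viewed as a complex number. -/
def qc (q : ℝ) : ℂ := (q : ℂ)

/-- `Q = q - q⁻¹` as a complex number. -/
def Qc (q : ℝ) : ℂ := qc q - (qc q)⁻¹

/-- The (1-based) integer index of `i : Fin N`. -/
def exZ {N : ℕ} (i : Fin N) : ℤ := (i : ℕ) + 1

/-- The defining relations of the quantum sphere `S_q^{2N-1}`:
the two-sided ideal generated by the listed elements is divided out. -/
inductive SphereRel (N : ℕ) (q : ℝ) : FA N → FA N → Prop
  | zz {i j : Fin N} (h : i < j) :
      SphereRel N q (zf i * zf j) (qc q • (zf j * zf i))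
  | ss {i j : Fin N} (h : i < j) :
      SphereRel N q (zsf i * zsf j) ((qc q)⁻¹ • (zsf j * zsf i))
  | zs {i j : Fin N} (h : i ≠ j) :
      SphereRel N q (zf i * zsf j) (qc q • (zsf j * zf i))
  | qcomm (i : Fin N) :
      SphereRel N q
        (zf i * zsf i - zsf i * zf i
          + ((qc q)⁻¹ * Qc q) • ∑ k ∈ Finset.univ.filter (fun k => i < k), zf k * zsf k)
        0
  | sphere : SphereRel N q (∑ i, zf i * zsf i) 1

/-- The quantum sphere `S_q^{2N-1}`. -/
abbrev X (N : ℕ) (q : ℝ) := RingQuot (SphereRel N q)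

/-- The generator `z_{i+1}` of the quantum sphere. -/
def Z (N : ℕ) (q : ℝ) (i : Fin N) : X N q := RingQuot.mkAlgHom ℂ (SphereRel N q) (zf i)

/-- The generator `z*_{i+1}` of the quantum sphere. -/
def Zs (N : ℕ) (q : ℝ) (i : Fin N) : X N q := RingQuot.mkAlgHom ℂ (SphereRel N q) (zsf i)

/-- The R-matrix coefficient `R^{ij}_{kl}`. -/
def Rm (q : ℝ) {N : ℕ} (i j k l : Fin N) : ℂ :=
  if i = l ∧ j = k ∧ i ≠ j then 1
  else if i = j ∧ j = k ∧ k = l then qc q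
  else if i = k ∧ j = l ∧ i < j then Qc q
  else 0

/-- The inverse R-matrix coefficient `(R⁻¹)^{ij}_{kl}`. -/
def Rinv (q : ℝ) {N : ℕ} (i j k l : Fin N) : ℂ :=
  if i = l ∧ j = k ∧ i ≠ j then 1
  else if i = j ∧ j = k ∧ k = l then (qc q)⁻¹
  else if i = k ∧ j = l ∧ j < i then -(Qc q)
  else 0

/-- `R̄^{ij}_{kl} = R^{lk}_{ji}`. -/
def Rbar (q : ℝ) {N : ℕ} (i j k l : Fin N) : ℂ := Rm q l k j i

/-- `(R̄⁻¹)^{ij}_{kl} = (R⁻¹)^{lk}_{ji}`. -/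
def Rbarinv (q : ℝ) {N : ℕ} (i j k l : Fin N) : ℂ := Rinv q l k j i

/-- `(R→)^{ij}_{kl} = R^{ki}_{lj}`. -/
def Rright (q : ℝ) {N : ℕ} (i j k l : Fin N) : ℂ := Rm q k i l j

/-- `(R←⁻¹)^{ij}_{kl} = q^{2l-2i} (R⁻¹)^{jl}_{ik}`. -/
def Rlinv (q : ℝ) {N : ℕ} (i j k l : Fin N) : ℂ :=
  qc q ^ (2 * exZ l - 2 * exZ i) * Rinv q j l i k

/-- `s = Σ_{i=0}^{N-1} q^{2i}`. -/
def sP (N : ℕ) (q : ℝ) : ℂ := ∑ i ∈ Finset.range N, qc q ^ (2 * i)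

/-- `s̃ = Σ_{i=1}^{N-1} q^{2i}`. -/
def sT (N : ℕ) (q : ℝ) : ℂ := ∑ i ∈ Finset.Ico 1 N, qc q ^ (2 * i)

/-- Kronecker delta. -/
def kdelta {N : ℕ} (k l : Fin N) : ℂ := if k = l then 1 else 0


/-- The data of a candidate first order differential calculus on the quantum
sphere: an `X`-bimodule `Γ` (axioms are stated separately in `IsFODC`)
together with a differential map `d`. -/
structure PreCalc (N : ℕ) (q : ℝ) where
  Γ : Type
  [instAdd : AddCommGroup Γ]
  [instMod : Module ℂ Γ]
  lact : X N q → Γ → Γ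
  ract : Γ → X N q → Γ
  d : X N q → Γ

attribute [instance] PreCalc.instAdd PreCalc.instMod

namespace PreCalc

variable {N : ℕ} {q : ℝ}

/-- `(Γ, d)` is a first order differential calculus on `X = S_q^{2N-1}`:
`Γ` is an `X`-bimodule (left and right module structures commuting with each
other and compatible with the `ℂ`-scalar multiplication), `d` is `ℂ`-linear
and satisfies the Leibniz rule. -/
def IsFODC (D : PreCalc N q) : Prop :=
  (∀ (x : X N q) (ω η : D.Γ), D.lact x (ω + η) = D.lact x ω + D.lact x η) ∧
  (∀ (x y : X N q) (ω : D.Γ), D.lact (x + y) ω = D.lact x ω + D.lact y ω) ∧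
  (∀ (x y : X N q) (ω : D.Γ), D.lact (x * y) ω = D.lact x (D.lact y ω)) ∧
  (∀ ω : D.Γ, D.lact 1 ω = ω) ∧
  (∀ (c : ℂ) (x : X N q) (ω : D.Γ), D.lact (c • x) ω = c • D.lact x ω) ∧
  (∀ (c : ℂ) (x : X N q) (ω : D.Γ), D.lact x (c • ω) = c • D.lact x ω) ∧
  (∀ (ω η : D.Γ) (x : X N q), D.ract (ω + η) x = D.ract ω x + D.ract η x) ∧
  (∀ (ω : D.Γ) (x y : X N q), D.ract ω (x + y) = D.ract ω x + D.ract ω y) ∧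
  (∀ (ω : D.Γ) (x y : X N q), D.ract ω (x * y) = D.ract (D.ract ω x) y) ∧
  (∀ ω : D.Γ, D.ract ω 1 = ω) ∧
  (∀ (c : ℂ) (ω : D.Γ) (x : X N q), D.ract (c • ω) x = c • D.ract ω x) ∧
  (∀ (c : ℂ) (ω : D.Γ) (x : X N q), D.ract ω (c • x) = c • D.ract ω x) ∧
  (∀ (x : X N q) (ω : D.Γ) (y : X N q), D.ract (D.lact x ω) y = D.lact x (D.ract ω y)) ∧
  (∀ x y : X N q, D.d (x + y) = D.d x + D.d y) ∧
  (∀ (c : ℂ) (x : X N q), D.d (c • x) = c • D.d x) ∧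
  (∀ x y : X N q, D.d (x * y) = D.ract (D.d x) y + D.lact x (D.d y))

/-- `dz_i`. -/
def dz (D : PreCalc N q) (i : Fin N) : D.Γ := D.d (Z N q i)

/-- `dz*_i`. -/
def dzs (D : PreCalc N q) (i : Fin N) : D.Γ := D.d (Zs N q i)

/-- The invariant one-form `θ₊ = Σ_i z_i·dz*_i`. -/
def thP (D : PreCalc N q) : D.Γ := ∑ i, D.lact (Z N q i) (D.dzs i)

/-- The invariant one-form `θ₋ = Σ_i q^{-2i} z*_i·dz_i`. -/
def thM (D : PreCalc N q) : D.Γ :=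
  ∑ i, (qc q ^ (-(2 * exZ i))) • D.lact (Zs N q i) (D.dz i)

/-- `Σ_{a,b} (R⁻¹)^{ab}_{kl} z_a·dz_b`. -/
def SRinv (D : PreCalc N q) (k l : Fin N) : D.Γ :=
  ∑ a, ∑ b, Rinv q a b k l • D.lact (Z N q a) (D.dz b)

/-- `Σ_{a,b} R̄^{ab}_{kl} z*_a·dz*_b`. -/
def SRbar (D : PreCalc N q) (k l : Fin N) : D.Γ :=
  ∑ a, ∑ b, Rbar q a b k l • D.lact (Zs N q a) (D.dzs b)

/-- `Σ_{a,b} (R←⁻¹)^{ab}_{kl} z*_a·dz_b`. -/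
def SRlinv (D : PreCalc N q) (k l : Fin N) : D.Γ :=
  ∑ a, ∑ b, Rlinv q a b k l • D.lact (Zs N q a) (D.dz b)

/-- `Σ_{a,b} (R→)^{ab}_{kl} z_a·dz*_b`. -/
def SRright (D : PreCalc N q) (k l : Fin N) : D.Γ :=
  ∑ a, ∑ b, Rright q a b k l • D.lact (Z N q a) (D.dzs b)

/-- `z_k·dz_l`. -/
def lzdz (D : PreCalc N q) (k l : Fin N) : D.Γ := D.lact (Z N q k) (D.dz l)
/-- `z*_k·dz*_l`. -/
def lzsdzs (D : PreCalc N q) (k l : Fin N) : D.Γ := D.lact (Zs N q k) (D.dzs l)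
/-- `z_k·dz*_l`. -/
def lzdzs (D : PreCalc N q) (k l : Fin N) : D.Γ := D.lact (Z N q k) (D.dzs l)
/-- `z*_k·dz_l`. -/
def lzsdz (D : PreCalc N q) (k l : Fin N) : D.Γ := D.lact (Zs N q k) (D.dz l)

/-- `z_k z_l·θ₊`. -/
def zzP (D : PreCalc N q) (k l : Fin N) : D.Γ := D.lact (Z N q k * Z N q l) D.thP
/-- `z_k z_l·θ₋`. -/
def zzM (D : PreCalc N q) (k l : Fin N) : D.Γ := D.lact (Z N q k * Z N q l) D.thM
/-- `z*_k z*_l·θ₊`. -/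
def zszsP (D : PreCalc N q) (k l : Fin N) : D.Γ := D.lact (Zs N q k * Zs N q l) D.thP
/-- `z*_k z*_l·θ₋`. -/
def zszsM (D : PreCalc N q) (k l : Fin N) : D.Γ := D.lact (Zs N q k * Zs N q l) D.thM
/-- `z_k z*_l·θ₊`. -/
def zzsP (D : PreCalc N q) (k l : Fin N) : D.Γ := D.lact (Z N q k * Zs N q l) D.thP
/-- `z_k z*_l·θ₋`. -/
def zzsM (D : PreCalc N q) (k l : Fin N) : D.Γ := D.lact (Z N q k * Zs N q l) D.thM
/-- `z*_k z_l·θ₊`. -/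
def zszP (D : PreCalc N q) (k l : Fin N) : D.Γ := D.lact (Zs N q k * Z N q l) D.thP
/-- `z*_k z_l·θ₋`. -/
def zszM (D : PreCalc N q) (k l : Fin N) : D.Γ := D.lact (Zs N q k * Z N q l) D.thM

/-- `dz_1,…,dz_N,dz*_1,…,dz*_N` form a free basis of `Γ` as a left `X`-module. -/
def FreeBasis (D : PreCalc N q) : Prop :=
  (∀ ω : D.Γ, ∃ a b : Fin N → X N q,
      ω = ∑ i, D.lact (a i) (D.dz i) + ∑ i, D.lact (b i) (D.dzs i)) ∧
  (∀ a b : Fin N → X N q,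
      ∑ i, D.lact (a i) (D.dz i) + ∑ i, D.lact (b i) (D.dzs i) = 0 →
      ∀ i, a i = 0 ∧ b i = 0)

/-- The relation `θ₊ + λ θ₋ = 0` holds in `Γ`. -/
def RelHolds (D : PreCalc N q) (lam : ℂ) : Prop := D.thP + lam • D.thM = 0

/-- `dz_1,…,dz*_N` generate `Γ` as a left `X`-module and all left-module
relations between them are exactly the ones generated by `θ₊ + λ θ₋ = 0`. -/
def GenRel (D : PreCalc N q) (lam : ℂ) : Prop :=
  (∀ ω : D.Γ, ∃ a b : Fin N → X N q,
      ω = ∑ i, D.lact (a i) (D.dz i) + ∑ i, D.lact (b i) (D.dzs i)) ∧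
  (∀ a b : Fin N → X N q,
      (∑ i, D.lact (a i) (D.dz i) + ∑ i, D.lact (b i) (D.dzs i) = 0 ↔
        ∃ c : X N q, ∀ i, a i = (lam * qc q ^ (-(2 * exZ i))) • (c * Zs N q i)
          ∧ b i = c * Z N q i)) ∧
  D.RelHolds lam

/-- The one-form `μ θ₊ + λ θ₋`. -/
def theta0 (D : PreCalc N q) (mu lam : ℂ) : D.Γ := mu • D.thP + lam • D.thM

/-- `c • ω` (scalar multiple of a one-form). -/
def smulG (D : PreCalc N q) (c : ℂ) (ω : D.Γ) : D.Γ := c • ω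

/-- The one-form `θ₀` quasi-commutes with all generators of `X`. -/
def QuasiComm (D : PreCalc N q) (θ₀ : D.Γ) : Prop :=
  ∀ m : Fin N, ∃ c c' : ℂ,
    D.ract θ₀ (Z N q m) = c • D.lact (Z N q m) θ₀ ∧
    D.ract θ₀ (Zs N q m) = c' • D.lact (Zs N q m) θ₀

/-- The calculus is inner with generating one-form `θ`. -/
def Inner (D : PreCalc N q) (θ : D.Γ) : Prop :=
  ∀ x : X N q, D.d x = D.ract θ x - D.lact x θ

/-- Structure equations of the calculus `Γ_{ατ}`. -/
def EqAT (D : PreCalc N q) (α τ : ℝ) : Prop :=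
  ∀ k l : Fin N,
    D.ract (D.dz k) (Z N q l) =
        (qc q * (α:ℂ)) • D.SRinv k l
        + (qc q ^ 2 * (α:ℂ) - 1) • D.lzdz k l
        + (qc q ^ 2 * (α:ℂ) ^ 2 * (1 - sT N q * (τ:ℂ))) • D.zzP k l
        + (qc q ^ 2 * (1 - (α:ℂ) * sT N q * (τ:ℂ))) • D.zzM k l
    ∧ D.ract (D.dzs k) (Zs N q l) =
        ((qc q)⁻¹ * (α:ℂ)⁻¹) • D.SRbar k l
        + (qc q ^ (-2:ℤ) * (α:ℂ)⁻¹ - 1) • D.lzsdzs k l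
        + (1 - sT N q * (τ:ℂ)) • D.zszsP k l
        + ((α:ℂ)⁻¹ ^ 2 * (1 - (α:ℂ) * sT N q * (τ:ℂ))) • D.zszsM k l
    ∧ D.ract (D.dz k) (Zs N q l) =
        ((qc q)⁻¹ * (α:ℂ)⁻¹) • D.SRlinv k l
        + (qc q ^ 2 * (α:ℂ) - 1) • D.lzdzs k l
        - (qc q ^ 2 * (α:ℂ) * (1 - sP N q * (τ:ℂ))) • D.zzsP k l
        - ((α:ℂ) * (τ:ℂ) * qc q ^ (2 * exZ k) * kdelta k l) • D.thP
        - ((α:ℂ)⁻¹ * (1 - qc q ^ 2 * (α:ℂ) * sP N q * (τ:ℂ))) • D.zzsM k l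
        - ((τ:ℂ) * qc q ^ (2 * exZ k) * kdelta k l) • D.thM
    ∧ D.ract (D.dzs k) (Z N q l) =
        (qc q * (α:ℂ)) • D.SRright k l
        + (qc q ^ (-2:ℤ) * (α:ℂ)⁻¹ - 1) • D.lzsdz k l
        - (qc q ^ 2 * (α:ℂ) * (1 - sP N q * (τ:ℂ))) • D.zszP k l
        - ((α:ℂ) * (τ:ℂ) * kdelta k l) • D.thP
        - ((α:ℂ)⁻¹ * (1 - qc q ^ 2 * (α:ℂ) * sP N q * (τ:ℂ))) • D.zszM k l
        - ((τ:ℂ) * kdelta k l) • D.thM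

/-- Structure equations of the calculus `Γ'_{αω}`. -/
def EqAP (D : PreCalc N q) (α ω : ℝ) : Prop :=
  ∀ k l : Fin N,
    D.ract (D.dz k) (Z N q l) =
        (qc q * (α:ℂ)) • D.SRinv k l
        + (qc q ^ 2 * (α:ℂ) - 1) • D.lzdz k l
        + (ω:ℂ) • D.zzP k l
        + ((α:ℂ)⁻¹ * (ω:ℂ) - qc q ^ 2 * ((α:ℂ) - 1)) • D.zzM k l
    ∧ D.ract (D.dzs k) (Zs N q l) =
        ((qc q)⁻¹ * (α:ℂ)⁻¹) • D.SRbar k l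
        + (qc q ^ (-2:ℤ) * (α:ℂ)⁻¹ - 1) • D.lzsdzs k l
        + (qc q ^ 2 * (α:ℂ) * (ω:ℂ)⁻¹ - ((α:ℂ)⁻¹ - 1)) • D.zszsP k l
        + (qc q ^ 2 * (ω:ℂ)⁻¹) • D.zszsM k l
    ∧ D.ract (D.dz k) (Zs N q l) =
        ((qc q)⁻¹ * (α:ℂ)⁻¹) • D.SRlinv k l
        + (qc q ^ 2 * (α:ℂ) - 1) • D.lzdzs k l
        - (qc q ^ 2 * (α:ℂ)) • D.zzsP k l
        - (α:ℂ)⁻¹ • D.zzsM k l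
    ∧ D.ract (D.dzs k) (Z N q l) =
        (qc q * (α:ℂ)) • D.SRright k l
        + (qc q ^ (-2:ℤ) * (α:ℂ)⁻¹ - 1) • D.lzsdz k l
        - (qc q ^ 2 * (α:ℂ)) • D.zszP k l
        - (α:ℂ)⁻¹ • D.zszM k l

/-- Structure equations of the calculus `Γ''_{ωψ}`. -/
def EqPP (D : PreCalc N q) (ω ψ : ℝ) : Prop :=
  ∀ k l : Fin N,
    D.ract (D.dz k) (Z N q l) =
        (qc q)⁻¹ • D.SRinv k l
        + (ω:ℂ) • D.zzP k l
        + (qc q ^ 2 * (ω:ℂ) * (ψ:ℂ) - 1) • D.zzM k l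
    ∧ D.ract (D.dzs k) (Zs N q l) =
        qc q • D.SRbar k l
        + ((ψ:ℂ) - qc q ^ 2) • D.zszsP k l
        + (qc q ^ 2 * (ω:ℂ)⁻¹) • D.zszsM k l
    ∧ D.ract (D.dz k) (Zs N q l) =
        qc q • D.SRlinv k l
        - D.zzsP k l
        - (qc q ^ 2:ℂ) • D.zzsM k l
    ∧ D.ract (D.dzs k) (Z N q l) =
        (qc q)⁻¹ • D.SRright k l
        - D.zszP k l
        - (qc q ^ 2:ℂ) • D.zszM k l

/-- Structure equations of the calculus `Γ'''_{ρτ}`. -/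
def EqPPP (D : PreCalc N q) (ρ τ : ℝ) : Prop :=
  ∀ k l : Fin N,
    D.ract (D.dz k) (Z N q l) =
        (qc q)⁻¹ • D.SRinv k l
        - (qc q ^ (-2:ℤ) * ((ρ:ℂ) / (τ:ℂ)) * (sT N q * (ρ:ℂ) - 1)) • D.zzP k l
        - (((ρ:ℂ) / (τ:ℂ)) * (sT N q * (τ:ℂ) - qc q ^ 2)) • D.zzM k l
    ∧ D.ract (D.dzs k) (Zs N q l) =
        qc q • D.SRbar k l
        - (((τ:ℂ) / (ρ:ℂ)) * (sT N q * (ρ:ℂ) - 1)) • D.zszsP k l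
        - (qc q ^ 2 * ((τ:ℂ) / (ρ:ℂ)) * (sT N q * (τ:ℂ) - qc q ^ 2)) • D.zszsM k l
    ∧ D.ract (D.dz k) (Zs N q l) =
        qc q • D.SRlinv k l
        - (qc q ^ (-2:ℤ) * (ρ:ℂ) * qc q ^ (2 * exZ k) * kdelta k l) • D.thP
        - ((τ:ℂ) * qc q ^ (2 * exZ k) * kdelta k l) • D.thM
        + (sP N q * (ρ:ℂ) - 1) • D.zzsP k l
        + (qc q ^ 2 * (sP N q * (τ:ℂ) - 1)) • D.zzsM k l
    ∧ D.ract (D.dzs k) (Z N q l) =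
        (qc q)⁻¹ • D.SRright k l
        - (qc q ^ (2 * (N:ℤ) - 2) * (ρ:ℂ) * kdelta k l) • D.thP
        - (qc q ^ (2 * (N:ℤ)) * (τ:ℂ) * kdelta k l) • D.thM
        + (sP N q * (ρ:ℂ) - 1) • D.zszP k l
        + (qc q ^ 2 * (sP N q * (τ:ℂ) - 1)) • D.zszM k l

/-- Structure equations of the calculus `Γ̃_λ`. -/
def EqTl (D : PreCalc N q) (lam : ℂ) : Prop :=
  ∀ k l : Fin N,
    D.ract (D.dz k) (Z N q l) =
        (qc q * lam⁻¹) • D.SRinv k l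
        + (qc q ^ 2 * lam⁻¹ - 1) • D.lzdz k l
        + (qc q ^ 2 * lam⁻¹ * (lam⁻¹ - 1)) • D.zzP k l
    ∧ D.ract (D.dzs k) (Zs N q l) =
        ((qc q)⁻¹ * lam) • D.SRbar k l
        + (qc q ^ (-2:ℤ) * lam - 1) • D.lzsdzs k l
        - (lam - 1) • D.zszsP k l
    ∧ D.ract (D.dz k) (Zs N q l) =
        ((qc q)⁻¹ * lam) • D.SRlinv k l
        + (qc q ^ 2 * lam⁻¹ - 1) • D.lzdzs k l
        - (qc q ^ 2 * lam⁻¹ - 1) • D.zzsP k l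
    ∧ D.ract (D.dzs k) (Z N q l) =
        (qc q * lam⁻¹) • D.SRright k l
        + (qc q ^ (-2:ℤ) * lam - 1) • D.lzsdz k l
        - (qc q ^ 2 * lam⁻¹ - 1) • D.zszP k l

/-- Structure equations of the calculus `Γ̃'_λ`. -/
def EqTp (D : PreCalc N q) (lam : ℂ) : Prop :=
  ∀ k l : Fin N,
    D.ract (D.dz k) (Z N q l) =
        (qc q)⁻¹ • D.SRinv k l
        - (lam⁻¹ * (qc q ^ 4 * lam⁻¹ - 1)) • D.zzP k l
    ∧ D.ract (D.dzs k) (Zs N q l) =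
        qc q • D.SRbar k l
        - (qc q ^ (-2:ℤ) * lam * (qc q ^ 4 * lam⁻¹ - 1)) • D.zszsP k l
    ∧ D.ract (D.dz k) (Zs N q l) =
        qc q • D.SRlinv k l
        + (qc q ^ 2 * lam⁻¹ - 1) • D.zzsP k l
    ∧ D.ract (D.dzs k) (Z N q l) =
        (qc q)⁻¹ • D.SRright k l
        + (qc q ^ 2 * lam⁻¹ - 1) • D.zszP k l

/-- Structure equations of the calculus `Γ̃''_λ` (for `λ ∉ {0,∞}`). -/
def EqTpp (D : PreCalc N q) (lam : ℂ) : Prop :=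
  ∀ k l : Fin N,
    D.ract (D.dz k) (Z N q l) = (qc q)⁻¹ • D.SRinv k l
    ∧ D.ract (D.dzs k) (Zs N q l) = qc q • D.SRbar k l
    ∧ D.ract (D.dz k) (Zs N q l) =
        qc q • D.SRlinv k l
        + (qc q ^ (-2:ℤ) * (sT N q)⁻¹ * (qc q ^ 4 * lam⁻¹ - 1)
            * qc q ^ (2 * exZ k) * kdelta k l) • D.thP
        - ((sT N q)⁻¹ * (qc q ^ (2 * (N:ℤ) + 2) * lam⁻¹ - 1)) • D.zzsP k l
    ∧ D.ract (D.dzs k) (Z N q l) =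
        (qc q)⁻¹ • D.SRright k l
        + (qc q ^ (-2:ℤ) * (sT N q)⁻¹ * (qc q ^ 4 * lam⁻¹ - 1) * kdelta k l) • D.thP
        - ((sT N q)⁻¹ * (qc q ^ (2 * (N:ℤ) + 2) * lam⁻¹ - 1)) • D.zszP k l

/-- Structure equations of the calculus `Γ̃°_λ`. -/
def EqTo (D : PreCalc N q) (lam : ℂ) : Prop :=
  ∀ k l : Fin N,
    D.ract (D.dz k) (Z N q l) =
        (qc q * lam⁻¹) • D.SRinv k l
        + (qc q ^ 2 * lam⁻¹ - 1) • D.lzdz k l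
        + (qc q ^ 2 * lam⁻¹ * (lam⁻¹ - 1)) • D.zzP k l
    ∧ D.ract (D.dzs k) (Zs N q l) =
        qc q • D.SRbar k l
        - (qc q ^ (-2:ℤ) * lam * (qc q ^ 4 * lam⁻¹ - 1)) • D.zszsP k l
    ∧ D.ract (D.dz k) (Zs N q l) = ((qc q)⁻¹ * lam) • D.SRlinv k l
    ∧ D.ract (D.dzs k) (Z N q l) =
        (qc q)⁻¹ • D.SRright k l
        + (qc q ^ (-2:ℤ) * lam - 1) • D.lzsdz k l

/-- Structure equations of the calculus `Γ̃°°_λ`. -/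
def EqToo (D : PreCalc N q) (lam : ℂ) : Prop :=
  ∀ k l : Fin N,
    D.ract (D.dz k) (Z N q l) =
        (qc q)⁻¹ • D.SRinv k l
        - (lam⁻¹ * (qc q ^ 4 * lam⁻¹ - 1)) • D.zzP k l
    ∧ D.ract (D.dzs k) (Zs N q l) =
        ((qc q)⁻¹ * lam) • D.SRbar k l
        + (qc q ^ (-2:ℤ) * lam - 1) • D.lzsdzs k l
        - (lam - 1) • D.zszsP k l
    ∧ D.ract (D.dz k) (Zs N q l) =
        qc q • D.SRlinv k l
        + (qc q ^ 2 * lam⁻¹ - 1) • D.lzdzs k l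
    ∧ D.ract (D.dzs k) (Z N q l) = (qc q * lam⁻¹) • D.SRright k l

end PreCalc

/-!
For a generator `x` of `X`, the bimodule axiom gives `θ₊·x = Σᵢ zᵢ·(dz*ᵢ·x)`, and the structure
equations for `dz*ᵢ·z_m` and `dz*ᵢ·z*_m` rewrite each summand as a left-module element. Summed
against `zᵢ`, the `R`-matrix terms collapse to `q x·θ₊` by the commutation relations of `X`, and
the remaining terms collapse by the sphere relation `Σᵢ zᵢ z*ᵢ = 1`. This leaves
`θ₊·x - x·θ₊ = (q⁻²λ - 1) dx` on generators; since both `d` and `[θ₊, ·]` satisfy the Leibniz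
rule, the identity extends to all of `X`.
-/

variable {N : ℕ} {q : ℝ}

lemma qc_ne_zero (hq : q ≠ 0) : qc q ≠ 0 := Complex.ofReal_ne_zero.mpr hq

lemma one_add_Qc_mul_qc (hq : q ≠ 0) : 1 + Qc q * qc q = qc q ^ 2 := by
  rw [Qc, sub_mul, inv_mul_cancel₀ (qc_ne_zero hq)]
  ring

lemma sum_Z_mul_Zs : ∑ i, Z N q i * Zs N q i = 1 := by
  simpa [Z, Zs] using RingQuot.mkAlgHom_rel ℂ (SphereRel.sphere (N := N) (q := q))

lemma Z_mul_Z {i j : Fin N} (h : i < j) : Z N q i * Z N q j = qc q • (Z N q j * Z N q i) := by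
  simpa [Z] using RingQuot.mkAlgHom_rel ℂ (SphereRel.zz (q := q) h)

lemma Z_mul_Zs {i j : Fin N} (h : i ≠ j) :
    Z N q i * Zs N q j = qc q • (Zs N q j * Z N q i) := by
  simpa [Z, Zs] using RingQuot.mkAlgHom_rel ℂ (SphereRel.zs (q := q) h)

lemma Z_mul_Zs_self (i : Fin N) :
    Z N q i * Zs N q i - Zs N q i * Z N q i
      + ((qc q)⁻¹ * Qc q) • ∑ k ∈ Finset.univ.filter (i < ·), Z N q k * Zs N q k = 0 := by
  simpa [Z, Zs] using RingQuot.mkAlgHom_rel ℂ (SphereRel.qcomm (q := q) i)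

section RMatrix

variable {M : Type*} [AddCommGroup M] [Module ℂ M]

lemma sum_sum_Rm_smul_left (m b : Fin N) (f : Fin N → Fin N → M) :
    ∑ i, ∑ a, Rm q i a m b • f i a =
      if m = b then qc q • f m m else f b m + if m < b then Qc q • f m b else 0 := by
  have hterm : ∀ i a, Rm q i a m b • f i a =
      (if i = b then if a = m then (if m = b then qc q • f m m else f b m) else 0 else 0)
        + (if i = m then if a = b then (if m < b then Qc q • f m b else 0) else 0 else 0) := by
    intro i a
    unfold Rm
    split_ifs <;> grind [one_smul, zero_smul]
  simp only [hterm, Finset.sum_add_distrib]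
  split_ifs <;> simp_all

lemma sum_sum_Rm_smul_right (m b : Fin N) (f : Fin N → Fin N → M) :
    ∑ i, ∑ a, Rm q m i b a • f i a =
      if m = b then qc q • f m m + ∑ i ∈ Finset.univ.filter (m < ·), Qc q • f i i
      else f b m := by
  have hterm : ∀ i a, Rm q m i b a • f i a =
      (if i = b then if a = m then (if m = b then qc q • f m m else f b m) else 0 else 0)
        + (if a = i then (if m = b ∧ m < i then Qc q • f i i else 0) else 0) := by
    intro i a
    unfold Rm
    split_ifs <;> grind [one_smul, zero_smul]
  simp only [hterm, Finset.sum_add_distrib, Finset.sum_ite_eq']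
  split_ifs with h <;> simp [h, Finset.sum_filter]

end RMatrix

lemma sum_sum_Rm_smul_Z_mul_Z (hq : q ≠ 0) (m b : Fin N) :
    ∑ i, ∑ a, Rm q i a m b • (Z N q i * Z N q a) = qc q • (Z N q m * Z N q b) := by
  rw [sum_sum_Rm_smul_left m b fun i a => Z N q i * Z N q a]
  rcases lt_trichotomy m b with hmb | rfl | hbm
  · simp only [hmb.ne, hmb, if_true, if_false, Z_mul_Z hmb, smul_smul]
    match_scalars
    linear_combination one_add_Qc_mul_qc hq
  · simp
  · simp [hbm.ne', not_lt_of_gt hbm, Z_mul_Z hbm]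

lemma sum_sum_Rm_smul_Z_mul_Zs (hq : q ≠ 0) (m b : Fin N) :
    ∑ i, ∑ a, Rm q m i b a • (Z N q i * Zs N q a) = qc q • (Zs N q m * Z N q b) := by
  rw [sum_sum_Rm_smul_right m b fun i a => Z N q i * Zs N q a]
  rcases eq_or_ne m b with rfl | hmb
  · rw [if_pos rfl, ← Finset.smul_sum]
    linear_combination (norm := skip) qc q • Z_mul_Zs_self (q := q) m
    match_scalars <;> field_simp [qc_ne_zero hq] <;> ring
  · rw [if_neg hmb, Z_mul_Zs hmb.symm]

namespace PreCalc

variable {D : PreCalc N q}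

namespace IsFODC

lemma lact_add (hD : D.IsFODC) (x : X N q) (ω η : D.Γ) :
    D.lact x (ω + η) = D.lact x ω + D.lact x η :=
  hD.1 x ω η

lemma add_lact (hD : D.IsFODC) (x y : X N q) (ω : D.Γ) :
    D.lact (x + y) ω = D.lact x ω + D.lact y ω :=
  hD.2.1 x y ω

lemma lact_mul (hD : D.IsFODC) (x y : X N q) (ω : D.Γ) :
    D.lact (x * y) ω = D.lact x (D.lact y ω) :=
  hD.2.2.1 x y ω

lemma lact_one (hD : D.IsFODC) (ω : D.Γ) : D.lact 1 ω = ω := hD.2.2.2.1 ω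

lemma smul_lact (hD : D.IsFODC) (c : ℂ) (x : X N q) (ω : D.Γ) :
    D.lact (c • x) ω = c • D.lact x ω :=
  hD.2.2.2.2.1 c x ω

lemma lact_smul (hD : D.IsFODC) (c : ℂ) (x : X N q) (ω : D.Γ) :
    D.lact x (c • ω) = c • D.lact x ω :=
  hD.2.2.2.2.2.1 c x ω

lemma ract_add (hD : D.IsFODC) (ω η : D.Γ) (x : X N q) :
    D.ract (ω + η) x = D.ract ω x + D.ract η x :=
  hD.2.2.2.2.2.2.1 ω η x

lemma add_ract (hD : D.IsFODC) (ω : D.Γ) (x y : X N q) :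
    D.ract ω (x + y) = D.ract ω x + D.ract ω y :=
  hD.2.2.2.2.2.2.2.1 ω x y

lemma ract_mul (hD : D.IsFODC) (ω : D.Γ) (x y : X N q) :
    D.ract ω (x * y) = D.ract (D.ract ω x) y :=
  hD.2.2.2.2.2.2.2.2.1 ω x y

lemma ract_one (hD : D.IsFODC) (ω : D.Γ) : D.ract ω 1 = ω := hD.2.2.2.2.2.2.2.2.2.1 ω

lemma ract_smul (hD : D.IsFODC) (c : ℂ) (ω : D.Γ) (x : X N q) :
    D.ract (c • ω) x = c • D.ract ω x :=
  hD.2.2.2.2.2.2.2.2.2.2.1 c ω x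

lemma smul_ract (hD : D.IsFODC) (c : ℂ) (ω : D.Γ) (x : X N q) :
    D.ract ω (c • x) = c • D.ract ω x :=
  hD.2.2.2.2.2.2.2.2.2.2.2.1 c ω x

lemma ract_lact (hD : D.IsFODC) (x : X N q) (ω : D.Γ) (y : X N q) :
    D.ract (D.lact x ω) y = D.lact x (D.ract ω y) :=
  hD.2.2.2.2.2.2.2.2.2.2.2.2.1 x ω y

lemma d_add (hD : D.IsFODC) (x y : X N q) :
    D.d (x + y) = D.d x + D.d y :=
  hD.2.2.2.2.2.2.2.2.2.2.2.2.2.1 x y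

lemma d_smul (hD : D.IsFODC) (c : ℂ) (x : X N q) :
    D.d (c • x) = c • D.d x :=
  hD.2.2.2.2.2.2.2.2.2.2.2.2.2.2.1 c x

lemma d_mul (hD : D.IsFODC) (x y : X N q) :
    D.d (x * y) = D.ract (D.d x) y + D.lact x (D.d y) :=
  hD.2.2.2.2.2.2.2.2.2.2.2.2.2.2.2 x y

lemma d_one (hD : D.IsFODC) : D.d 1 = 0 := by
  simpa [hD.ract_one, hD.lact_one] using hD.d_mul 1 1

lemma lact_sub (hD : D.IsFODC) (x : X N q) (ω η : D.Γ) :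
    D.lact x (ω - η) = D.lact x ω - D.lact x η :=
  map_sub (AddMonoidHom.mk' (D.lact x) (hD.lact_add x)) ω η

lemma ract_sub (hD : D.IsFODC) (ω η : D.Γ) (x : X N q) :
    D.ract (ω - η) x = D.ract ω x - D.ract η x :=
  map_sub (AddMonoidHom.mk' (D.ract · x) (hD.ract_add · · x)) ω η

lemma lact_sum (hD : D.IsFODC) {ι : Type*} (s : Finset ι) (x : X N q) (ω : ι → D.Γ) :
    D.lact x (∑ i ∈ s, ω i) = ∑ i ∈ s, D.lact x (ω i) :=
  map_sum (AddMonoidHom.mk' (D.lact x) (hD.lact_add x)) ω s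

lemma sum_lact (hD : D.IsFODC) {ι : Type*} (s : Finset ι) (x : ι → X N q) (ω : D.Γ) :
    D.lact (∑ i ∈ s, x i) ω = ∑ i ∈ s, D.lact (x i) ω :=
  map_sum (AddMonoidHom.mk' (D.lact · ω) (hD.add_lact · · ω)) x s

lemma ract_sum (hD : D.IsFODC) {ι : Type*} (s : Finset ι) (ω : ι → D.Γ) (x : X N q) :
    D.ract (∑ i ∈ s, ω i) x = ∑ i ∈ s, D.ract (ω i) x :=
  map_sum (AddMonoidHom.mk' (D.ract · x) (hD.ract_add · · x)) ω s

lemma sum_lact_Z_lact_Zs (hD : D.IsFODC) (ω : D.Γ) :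
    ∑ i, D.lact (Z N q i) (D.lact (Zs N q i) ω) = ω := by
  simp only [← hD.lact_mul, ← hD.sum_lact, sum_Z_mul_Zs, hD.lact_one]

lemma sum_lact_sum_sum_smul_lact (hD : D.IsFODC) {ι κ μ : Type*} [Fintype ι] [Fintype κ]
    [Fintype μ] (x : ι → X N q) (y : κ → X N q) (c : ι → κ → μ → ℂ) (ω : μ → D.Γ) :
    ∑ i, D.lact (x i) (∑ a, ∑ b, c i a b • D.lact (y a) (ω b)) =
      ∑ b, D.lact (∑ i, ∑ a, c i a b • (x i * y a)) (ω b) := by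
  simp only [hD.lact_sum, hD.sum_lact, hD.lact_smul, hD.smul_lact, hD.lact_mul]
  exact (Finset.sum_congr rfl fun _ _ => Finset.sum_comm).trans Finset.sum_comm

lemma ract_thP (hD : D.IsFODC) (x : X N q) :
    D.ract D.thP x = ∑ i, D.lact (Z N q i) (D.ract (D.dzs i) x) := by
  simp only [thP, hD.ract_sum, hD.ract_lact]

lemma inner_of_generators (hD : D.IsFODC) (θ : D.Γ)
    (hZ : ∀ i, D.dz i = D.ract θ (Z N q i) - D.lact (Z N q i) θ)
    (hZs : ∀ i, D.dzs i = D.ract θ (Zs N q i) - D.lact (Zs N q i) θ) : D.Inner θ := by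
  intro x
  obtain ⟨y, rfl⟩ := RingQuot.mkAlgHom_surjective ℂ (SphereRel N q) x
  induction y using FreeAlgebra.induction with
  | grade0 r =>
    rw [AlgHom.commutes, Algebra.algebraMap_eq_smul_one, hD.d_smul, hD.d_one, hD.smul_ract,
      hD.smul_lact, hD.ract_one, hD.lact_one, smul_zero, sub_self]
  | grade1 g =>
    cases g with
    | inl i => exact hZ i
    | inr i => exact hZs i
  | mul a b iha ihb =>
    rw [map_mul, hD.d_mul, iha, ihb, hD.ract_sub, hD.lact_sub, ← hD.ract_mul, hD.ract_lact,
      hD.lact_mul]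
    abel
  | add a b iha ihb =>
    rw [map_add, hD.d_add, iha, ihb, hD.add_ract, hD.add_lact]
    abel

lemma inner_inv_smul (hD : D.IsFODC) {θ : D.Γ} {c : ℂ} (hc : c ≠ 0)
    (hZ : ∀ i, D.ract θ (Z N q i) = D.lact (Z N q i) θ + c • D.dz i)
    (hZs : ∀ i, D.ract θ (Zs N q i) = D.lact (Zs N q i) θ + c • D.dzs i) :
    D.Inner (c⁻¹ • θ) := by
  refine hD.inner_of_generators _ (fun i => ?_) (fun i => ?_)
  · rw [hD.ract_smul, hD.lact_smul, hZ, smul_add, inv_smul_smul₀ hc, add_sub_cancel_left]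
  · rw [hD.ract_smul, hD.lact_smul, hZs, smul_add, inv_smul_smul₀ hc, add_sub_cancel_left]

end IsFODC

namespace EqTl

variable {lam : ℂ}

lemma ract_thP_Z (hEq : D.EqTl lam) (hD : D.IsFODC) (hq : q ≠ 0) (m : Fin N) :
    D.ract D.thP (Z N q m) = D.lact (Z N q m) D.thP + (qc q ^ (-2:ℤ) * lam - 1) • D.dz m := by
  have hR : ∑ i, D.lact (Z N q i) (D.SRright i m) = qc q • D.lact (Z N q m) D.thP := by
    simp only [SRright, Rright]
    rw [hD.sum_lact_sum_sum_smul_lact (Z N q) (Z N q) (fun i a b => Rm q i a m b)]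
    simp only [sum_sum_Rm_smul_Z_mul_Z hq, hD.smul_lact, hD.lact_mul, thP, hD.lact_sum,
      Finset.smul_sum]
  have hL : ∑ i, D.lact (Z N q i) (D.lzsdz i m) = D.dz m := hD.sum_lact_Z_lact_Zs _
  have hP : ∑ i, D.lact (Z N q i) (D.zszP i m) = D.lact (Z N q m) D.thP := by
    simp only [zszP, hD.lact_mul, hD.sum_lact_Z_lact_Zs]
  calc D.ract D.thP (Z N q m)
      = (qc q * lam⁻¹) • ∑ i, D.lact (Z N q i) (D.SRright i m)
          + (qc q ^ (-2:ℤ) * lam - 1) • ∑ i, D.lact (Z N q i) (D.lzsdz i m)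
          - (qc q ^ 2 * lam⁻¹ - 1) • ∑ i, D.lact (Z N q i) (D.zszP i m) := by
        simp only [hD.ract_thP, (hEq · m |>.2.2.2), hD.lact_sub, hD.lact_add, hD.lact_smul,
          Finset.sum_sub_distrib, Finset.sum_add_distrib, Finset.smul_sum]
    _ = D.lact (Z N q m) D.thP + (qc q ^ (-2:ℤ) * lam - 1) • D.dz m := by
        rw [hR, hL, hP]
        match_scalars <;> ring

lemma ract_thP_Zs (hEq : D.EqTl lam) (hD : D.IsFODC) (hq : q ≠ 0) (m : Fin N) :
    D.ract D.thP (Zs N q m) = D.lact (Zs N q m) D.thP + (qc q ^ (-2:ℤ) * lam - 1) • D.dzs m := by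
  have hR : ∑ i, D.lact (Z N q i) (D.SRbar i m) = qc q • D.lact (Zs N q m) D.thP := by
    simp only [SRbar, Rbar]
    rw [hD.sum_lact_sum_sum_smul_lact (Z N q) (Zs N q) (fun i a b => Rm q m i b a)]
    simp only [sum_sum_Rm_smul_Z_mul_Zs hq, hD.smul_lact, hD.lact_mul, thP, hD.lact_sum,
      Finset.smul_sum]
  have hL : ∑ i, D.lact (Z N q i) (D.lzsdzs i m) = D.dzs m := hD.sum_lact_Z_lact_Zs _
  have hP : ∑ i, D.lact (Z N q i) (D.zszsP i m) = D.lact (Zs N q m) D.thP := by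
    simp only [zszsP, hD.lact_mul, hD.sum_lact_Z_lact_Zs]
  calc D.ract D.thP (Zs N q m)
      = ((qc q)⁻¹ * lam) • ∑ i, D.lact (Z N q i) (D.SRbar i m)
          + (qc q ^ (-2:ℤ) * lam - 1) • ∑ i, D.lact (Z N q i) (D.lzsdzs i m)
          - (lam - 1) • ∑ i, D.lact (Z N q i) (D.zszsP i m) := by
        simp only [hD.ract_thP, (hEq · m |>.2.1), hD.lact_sub, hD.lact_add, hD.lact_smul,
          Finset.sum_sub_distrib, Finset.sum_add_distrib, Finset.smul_sum]
    _ = D.lact (Zs N q m) D.thP + (qc q ^ (-2:ℤ) * lam - 1) • D.dzs m := by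
        rw [hR, hL, hP]
        match_scalars
        · field_simp [qc_ne_zero hq]
          ring
        · ring

end EqTl

end PreCalc

end QSphere

open QSphere in
theorem stmt14_general (N : ℕ) (q : ℝ) (hq : q ≠ -1 ∧ q ≠ 0 ∧ q ≠ 1)
    (lam : ℂ) (hlam : lam ≠ 0 ∧ lam ≠ qc q ^ 2)
    (D : PreCalc N q) (hD : D.IsFODC) (hEq : D.EqTl lam) :
    D.Inner (D.smulG (qc q ^ (-2:ℤ) * lam - 1)⁻¹ D.thP) := by
  have hc : qc q ^ (-2:ℤ) * lam - 1 ≠ 0 := by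
    intro h
    apply hlam.2
    field_simp [qc_ne_zero hq.2.1] at h
    linear_combination h
  exact hD.inner_inv_smul hc (hEq.ract_thP_Z hD hq.2.1) (hEq.ract_thP_Zs hD hq.2.1)

open QSphere in
/-- the calculus `Γ̃_λ` is inner with `θ = (q⁻²λ - 1)⁻¹ θ₊`. -/
theorem stmt14 (N : ℕ) (hN : 2 ≤ N) (q : ℝ) (hq : q ≠ -1 ∧ q ≠ 0 ∧ q ≠ 1)
    (lam : ℂ) (hlam : lam ≠ 0 ∧ lam ≠ qc q ^ 2)
    (D : PreCalc N q) (hD : D.IsFODC) (hRel : D.RelHolds lam) (hEq : D.EqTl lam) :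
    D.Inner (D.smulG (qc q ^ (-2:ℤ) * lam - 1)⁻¹ D.thP) :=
  stmt14_general N q hq lam hlam D hD hEq
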